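/- arXiv:2404.07515 — 5 statements merged into one kernel-verified Lean document; each statement's English description precedes it below -/
import Mathlib

section
/- Let d ≥ 2, m ≥ 1, and let A ∈ ℝ^{m×d} have rows a_1,…,a_m. Suppose L ≥ 0 and U ≥ 0 are such that L·dist(x,y) ≤ ‖Φ_A(x) − Φ_A(y)‖₂ ≤ U·dist(x,y) for all x, y ∈ ℝ^d. Then π·L² ≤ (π − 2)·U². (Equivalently, the condition number β_A = U_A/L_A of any real measurement matrix satisfies β_A ≥ √(π/(π−2)).) -/
open Real

/-- The ℓ₂ norm of `Φ_A(x) - Φ_A(y)`, where `Φ_A(x) = (|⟨a_1,x⟩|, …, |⟨a_m,x⟩|)`. -/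
noncomputable def phiDist {m d : ℕ} (A : Fin m → EuclideanSpace ℝ (Fin d))
    (x y : EuclideanSpace ℝ (Fin d)) : ℝ :=
  Real.sqrt (∑ i, (|(inner ℝ (A i) x : ℝ)| - |(inner ℝ (A i) y : ℝ)|) ^ 2)

/-! Let `u, v` be orthonormal and, for `θ ∈ [0, 2π]`, rotate them to the orthonormal pair
`x_θ = cos θ u + sin θ v`, `y_θ = -sin θ u + cos θ v`. Since `dist(x_θ, y_θ) = √2`, the lower bound
gives `2 L² ≤ ∑ᵢ (|⟨aᵢ, x_θ⟩| - |⟨aᵢ, y_θ⟩|)²` for every `θ`. Averaging over `θ`, each summand has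
mean `(1 - 2/π) (⟨aᵢ, u⟩² + ⟨aᵢ, v⟩²)` because `|sin|` has mean `2/π`. The upper bound at the pair
`(0, h)` says `∑ᵢ ⟨aᵢ, h⟩² ≤ U² ‖h‖²`, so `∑ᵢ (⟨aᵢ, u⟩² + ⟨aᵢ, v⟩²) ≤ 2 U²`. -/

open intervalIntegral

lemma integral_abs_sin_two_mul_sub (φ : ℝ) : ∫ θ in (0)..(2 * π), |sin (2 * θ - φ)| = 4 := by
  have hper : Function.Periodic (fun t => |sin t|) π := fun t => by simp [sin_add_pi]
  have hint (a b : ℝ) : IntervalIntegrable (fun t => |sin t|) MeasureTheory.volume a b :=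
    continuous_sin.abs.intervalIntegrable a b
  have hhalf : ∫ t in (0)..π, |sin t| = 2 := by
    rw [integral_congr (g := sin) fun t ht => abs_of_nonneg <| by
      rw [Set.uIcc_of_le pi_pos.le] at ht
      exact sin_nonneg_of_nonneg_of_le_pi ht.1 ht.2]
    norm_num
  rw [integral_comp_mul_sub (fun t => |sin t|) two_ne_zero,
    show 2 * (2 * π) - φ = (2 * 0 - φ) + (4 : ℤ) • π by ring,
    hper.intervalIntegral_add_zsmul_eq 4 _ hint, hper.intervalIntegral_add_eq _ 0, zero_add, hhalf]
  norm_num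

/-- `(|p| - |q|)² = p² + q² - 2 |p q|`, and for `p, q` as below `p q` is a sinusoid in `2 θ` of
amplitude `(a² + b²) / 2`. -/
lemma exists_sq_abs_sub_abs_eq (a b : ℝ) : ∃ φ : ℝ, ∀ θ : ℝ,
    (|a * cos θ + b * sin θ| - |b * cos θ - a * sin θ|) ^ 2
      = (a ^ 2 + b ^ 2) * (1 - |sin (2 * θ - φ)|) := by
  set z : ℂ := ⟨a, b⟩
  have ha : ‖z‖ * cos z.arg = a := Complex.norm_mul_cos_arg z
  have hb : ‖z‖ * sin z.arg = b := Complex.norm_mul_sin_arg z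
  refine ⟨2 * z.arg, fun θ => ?_⟩
  set t := θ - z.arg
  have hx : a * cos θ + b * sin θ = ‖z‖ * cos t := by rw [cos_sub, ← ha, ← hb]; ring
  have hy : b * cos θ - a * sin θ = -(‖z‖ * sin t) := by rw [sin_sub, ← ha, ← hb]; ring
  have hr : a ^ 2 + b ^ 2 = ‖z‖ ^ 2 := by
    rw [← ha, ← hb]; linear_combination ‖z‖ ^ 2 * sin_sq_add_cos_sq z.arg
  have hsin : |sin (2 * θ - 2 * z.arg)| = 2 * (|sin t| * |cos t|) := by
    rw [show 2 * θ - 2 * z.arg = 2 * t by ring, sin_two_mul, abs_mul, abs_mul, abs_two, mul_assoc]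
  have hpyth : |sin t| ^ 2 + |cos t| ^ 2 = 1 := by rw [sq_abs, sq_abs, sin_sq_add_cos_sq]
  rw [hx, hy, abs_neg, abs_mul, abs_mul, abs_norm, hr, hsin]
  linear_combination ‖z‖ ^ 2 * hpyth

lemma two_pi_mul_le_of_forall_le_sum {ι : Type*} [Fintype ι] (α β : ι → ℝ) (c : ℝ)
    (h : ∀ θ, c ≤ ∑ i, (|α i * cos θ + β i * sin θ| - |β i * cos θ - α i * sin θ|) ^ 2) :
    2 * π * c ≤ (2 * π - 4) * ∑ i, (α i ^ 2 + β i ^ 2) := by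
  choose φ hφ using fun i => exists_sq_abs_sub_abs_eq (α i) (β i)
  simp only [hφ] at h
  have hcont (i : ι) : Continuous fun θ => (α i ^ 2 + β i ^ 2) * (1 - |sin (2 * θ - φ i)|) := by
    fun_prop
  have hrow (i : ι) : ∫ θ in (0)..(2 * π), (α i ^ 2 + β i ^ 2) * (1 - |sin (2 * θ - φ i)|)
      = (α i ^ 2 + β i ^ 2) * (2 * π - 4) := by
    rw [intervalIntegral.integral_const_mul, intervalIntegral.integral_sub intervalIntegrable_const
      ((by fun_prop : Continuous fun θ => |sin (2 * θ - φ i)|).intervalIntegrable _ _),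
      integral_abs_sin_two_mul_sub]
    simp
  have hmono := integral_mono_on (μ := MeasureTheory.volume) (by positivity : (0 : ℝ) ≤ 2 * π)
    intervalIntegrable_const ((continuous_finsetSum _ fun i _ => hcont i).intervalIntegrable _ _) fun θ _ => h θ
  rw [integral_const, integral_finsetSum fun i _ => (hcont i).intervalIntegrable _ _,
    Finset.sum_congr rfl fun i _ => hrow i, ← Finset.sum_mul] at hmono
  simpa [mul_comm] using hmono

lemma rotate_orthonormal_pair {E : Type*} [NormedAddCommGroup E] [InnerProductSpace ℝ E]
    {u v : E} (hu : ‖u‖ = 1) (hv : ‖v‖ = 1) (huv : inner ℝ u v = 0) (θ : ℝ) :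
    ‖cos θ • u + sin θ • v‖ = 1 ∧ ‖(-sin θ) • u + cos θ • v‖ = 1 ∧
      inner ℝ (cos θ • u + sin θ • v) ((-sin θ) • u + cos θ • v) = 0 := by
  have hvu : inner ℝ v u = 0 := by rw [real_inner_comm, huv]
  have hnorm (a b : ℝ) (hab : a ^ 2 + b ^ 2 = 1) : ‖a • u + b • v‖ = 1 := by
    rw [← pow_eq_one_iff_of_nonneg (norm_nonneg _) two_ne_zero, norm_add_sq_real, norm_smul,
      norm_smul, real_inner_smul_left, real_inner_smul_right, huv, hu, hv]
    simp only [norm_eq_abs, mul_pow, sq_abs]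
    linear_combination hab
  refine ⟨hnorm _ _ (cos_sq_add_sin_sq θ), hnorm _ _ (by rw [neg_sq, sin_sq_add_cos_sq]), ?_⟩
  simp only [inner_add_left, inner_add_right, real_inner_smul_left, real_inner_smul_right, huv,
    hvu, real_inner_self_eq_norm_sq, hu, hv]
  ring

section phiDist

variable {m d : ℕ} (A : Fin m → EuclideanSpace ℝ (Fin d))

lemma sum_sq_inner_le_of_phiDist_le (U : ℝ)
    (hup : ∀ x y : EuclideanSpace ℝ (Fin d), phiDist A x y ≤ U * min ‖x - y‖ ‖x + y‖)
    (h : EuclideanSpace ℝ (Fin d)) : ∑ i, inner ℝ (A i) h ^ 2 ≤ U ^ 2 * ‖h‖ ^ 2 := by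
  have := hup 0 h
  simp only [phiDist, inner_zero_right, abs_zero, zero_sub, neg_sq, sq_abs, zero_add, norm_neg,
    min_self, sqrt_le_iff] at this
  simpa [mul_pow] using this.2

lemma two_mul_sq_le_of_le_phiDist {L : ℝ} (hL : 0 ≤ L)
    (hlow : ∀ x y : EuclideanSpace ℝ (Fin d), L * min ‖x - y‖ ‖x + y‖ ≤ phiDist A x y)
    {x y : EuclideanSpace ℝ (Fin d)} (hx : ‖x‖ = 1) (hy : ‖y‖ = 1) (hxy : inner ℝ x y = 0) :
    2 * L ^ 2 ≤ ∑ i, (|inner ℝ (A i) x| - |inner ℝ (A i) y|) ^ 2 := by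
  have hsub : ‖x - y‖ ^ 2 = 2 := by rw [norm_sub_sq_real, hx, hy, hxy]; norm_num
  have hadd : ‖x + y‖ = ‖x - y‖ := by
    rw [← sq_eq_sq₀ (norm_nonneg _) (norm_nonneg _), hsub, norm_add_sq_real, hx, hy, hxy]; norm_num
  have := hlow x y
  rw [hadd, min_self, phiDist, le_sqrt (by positivity) (by positivity), mul_pow, hsub] at this
  linarith

end phiDist

theorem stmt0_general {d m : ℕ} (hd : 2 ≤ d)
    (A : Fin m → EuclideanSpace ℝ (Fin d)) (L U : ℝ) (hL : 0 ≤ L)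
    (hlow : ∀ x y : EuclideanSpace ℝ (Fin d),
      L * min ‖x - y‖ ‖x + y‖ ≤ phiDist A x y)
    (hup : ∀ x y : EuclideanSpace ℝ (Fin d),
      phiDist A x y ≤ U * min ‖x - y‖ ‖x + y‖) :
    π * L ^ 2 ≤ (π - 2) * U ^ 2 := by
  obtain ⟨hunit, horth⟩ := (EuclideanSpace.basisFun (Fin d) ℝ).orthonormal
  set u := EuclideanSpace.basisFun (Fin d) ℝ ⟨0, by omega⟩
  set v := EuclideanSpace.basisFun (Fin d) ℝ ⟨1, by omega⟩
  have huv : inner ℝ u v = 0 := horth (by simp [Fin.ext_iff])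
  have hpt (θ : ℝ) : 2 * L ^ 2 ≤ ∑ i, (|inner ℝ (A i) u * cos θ + inner ℝ (A i) v * sin θ|
      - |inner ℝ (A i) v * cos θ - inner ℝ (A i) u * sin θ|) ^ 2 := by
    obtain ⟨hx, hy, hxy⟩ := rotate_orthonormal_pair (hunit _) (hunit _) huv θ
    convert two_mul_sq_le_of_le_phiDist A hL hlow hx hy hxy using 6 <;>
      simp only [inner_add_right, inner_smul_right] <;> ring
  have hS : ∑ i, (inner ℝ (A i) u ^ 2 + inner ℝ (A i) v ^ 2) ≤ 2 * U ^ 2 := by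
    have hu := sum_sq_inner_le_of_phiDist_le A U hup u
    have hv := sum_sq_inner_le_of_phiDist_le A U hup v
    rw [hunit] at hu hv
    rw [Finset.sum_add_distrib]
    linarith
  have hπ : 0 ≤ 2 * π - 4 := by linarith [pi_gt_three]
  linarith [two_pi_mul_le_of_forall_le_sum _ _ _ hpt, mul_le_mul_of_nonneg_left hS hπ]

theorem stmt0 {d m : ℕ} (hd : 2 ≤ d) (hm : 1 ≤ m)
    (A : Fin m → EuclideanSpace ℝ (Fin d)) (L U : ℝ) (hL : 0 ≤ L) (hU : 0 ≤ U)
    (hlow : ∀ x y : EuclideanSpace ℝ (Fin d),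
      L * min ‖x - y‖ ‖x + y‖ ≤ phiDist A x y)
    (hup : ∀ x y : EuclideanSpace ℝ (Fin d),
      phiDist A x y ≤ U * min ‖x - y‖ ‖x + y‖) :
    π * L ^ 2 ≤ (π - 2) * U ^ 2 :=
  stmt0_general hd A L U hL hlow hup
end

section
/- Let m ≥ 3 be an odd integer and let E_m ∈ ℝ^{m×2} be the harmonic frame. Then the optimal lower Lipschitz constant satisfies L_{E_m} = √(m/2 − 1/(2·sin(π/(2m)))) and the optimal upper Lipschitz constant satisfies U_{E_m} = √(m/2); consequently the condition number is β_{E_m} = U_{E_m}/L_{E_m} = 1/√(1 − 1/(m·sin(π/(2m)))). -/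
open Real

/-- The set of ratios `‖Φ_A(x) - Φ_A(y)‖₂ / dist(x,y)` over pairs with `dist(x,y) ≠ 0`,
where `dist(x,y) = min(‖x-y‖, ‖x+y‖)`. -/
noncomputable def ratioSet {m d : ℕ} (A : Fin m → EuclideanSpace ℝ (Fin d)) : Set ℝ :=
  {r | ∃ x y : EuclideanSpace ℝ (Fin d), min ‖x - y‖ ‖x + y‖ ≠ 0 ∧
    r = phiDist A x y / min ‖x - y‖ ‖x + y‖}

/-- Optimal lower Lipschitz constant. -/
noncomputable def LA {m d : ℕ} (A : Fin m → EuclideanSpace ℝ (Fin d)) : ℝ :=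
  sInf (ratioSet A)

/-- Optimal upper Lipschitz constant. -/
noncomputable def UA {m d : ℕ} (A : Fin m → EuclideanSpace ℝ (Fin d)) : ℝ :=
  sSup (ratioSet A)

/-- The harmonic frame in `ℝ²`: rows `(cos(jπ/m), sin(jπ/m))`, `j = 0, …, m-1`. -/
noncomputable def harmonicFrame (m : ℕ) : Fin m → EuclideanSpace ℝ (Fin 2) :=
  fun j => (EuclideanSpace.equiv (Fin 2) ℝ).symm
    ![Real.cos ((j : ℕ) * π / m), Real.sin ((j : ℕ) * π / m)]

open Finset
open scoped RealInnerProductSpace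

/-!
Write `x = r e(α)` and `y = s e(β)` in polar form. Since `E_m` is a tight frame,
`‖Φ(x) - Φ(y)‖² = m (r² + s²) / 2 - r s ∑ⱼ |cos (α - β) + cos (2jπ/m - α - β)|`, while
`dist(x, y)² = r² + s² - 2 r s |cos (α - β)|`. The cosines `cos (2jπ/m - α - β)` sum to zero, so
the triangle inequality gives `∑ⱼ |p + cⱼ| ≥ m |p|`, which is the upper bound (attained at `y = 0`).
Conversely `|p + c| ≤ (1 - |p|) |c| + |p| (1 ± c)` reduces the lower bound to
`∑ⱼ |cos (γ + 2jπ/m)| ≤ 1 / sin (π/2m)`. For odd `m` the angles `2jπ/m` run through the angles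
`kπ/m` modulo `π`; shifting `γ` by multiples of `π/m` into a window where all these cosines are
nonnegative, the sum telescopes to `-sin (γ - π/2m) / sin (π/2m)`. Equality holds for orthogonal
unit vectors whose bisector is placed where this sine equals `-1`.
-/

lemma two_mul_sin_mul_sum_cos (ψ h : ℝ) (n : ℕ) :
    2 * sin (h / 2) * ∑ k ∈ range n, cos (ψ + k * h) =
      sin (ψ + n * h - h / 2) - sin (ψ - h / 2) := by
  have htel : ∀ k : ℕ, 2 * sin (h / 2) * cos (ψ + k * h) =
      sin (ψ + (k + 1 : ℕ) * h - h / 2) - sin (ψ + k * h - h / 2) := by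
    intro k
    rw [two_mul_sin_mul_cos, show h / 2 - (ψ + k * h) = -(ψ + k * h - h / 2) by ring, sin_neg]
    push_cast
    ring_nf
  rw [mul_sum, sum_congr rfl fun k _ => htel k,
    sum_range_sub (fun k : ℕ => sin (ψ + k * h - h / 2))]
  simp

lemma sum_cos_add_mul_two_pi_div {m : ℕ} (hm : 1 < m) (χ : ℝ) :
    ∑ k ∈ range m, cos (χ + k * (2 * π / m)) = 0 := by
  have hm' : (1 : ℝ) < m := by exact_mod_cast hm
  have hsin : sin (2 * π / m / 2) ≠ 0 := by
    refine (sin_pos_of_pos_of_lt_pi (by positivity) ?_).ne'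
    rw [div_div, div_lt_iff₀ (by positivity)]
    nlinarith [pi_pos]
  have h := two_mul_sin_mul_sum_cos χ (2 * π / m) m
  rw [show χ + m * (2 * π / m) - 2 * π / m / 2 = χ - 2 * π / m / 2 + 2 * π by
    field_simp; ring, sin_add_two_pi, sub_self] at h
  simpa [hsin] using h

lemma sum_range_mul_add_of_periodic {M : Type*} [AddCommMonoid M] {m : ℕ} {f : ℕ → M}
    (hf : Function.Periodic f m) {c : ℕ} (hc : c.Coprime m) (d : ℕ) :
    ∑ k ∈ range m, f (c * k + d) = ∑ k ∈ range m, f k := by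
  rcases Nat.eq_zero_or_pos m with rfl | hm
  · simp
  have hmaps : ∀ k ∈ range m, (c * k + d) % m ∈ range m :=
    fun k _ => mem_range.mpr (Nat.mod_lt _ hm)
  have hinj : Set.InjOn (fun k => (c * k + d) % m) (range m : Set ℕ) := by
    intro a ha b hb hab
    have hab' : c * a ≡ c * b [MOD m] := Nat.ModEq.add_right_cancel' d hab
    have := Nat.ModEq.cancel_left_of_coprime (Nat.Coprime.symm hc) hab'
    rwa [Nat.ModEq, Nat.mod_eq_of_lt (mem_range.mp ha), Nat.mod_eq_of_lt (mem_range.mp hb)] at this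
  calc ∑ k ∈ range m, f (c * k + d) = ∑ k ∈ range m, f ((c * k + d) % m) :=
        sum_congr rfl fun k _ => (hf.map_mod_nat _).symm
    _ = ∑ k ∈ range m, f k :=
        sum_nbij _ hmaps hinj (surjOn_of_injOn_of_card_le _ hmaps hinj le_rfl) fun _ _ => rfl

lemma sq_min_norm_sub_norm_add {F : Type*} [NormedAddCommGroup F] [InnerProductSpace ℝ F]
    (x y : F) : min ‖x - y‖ ‖x + y‖ ^ 2 = ‖x‖ ^ 2 + ‖y‖ ^ 2 - 2 * |⟪x, y⟫| := by
  have hsq : min ‖x - y‖ ‖x + y‖ ^ 2 = min (‖x - y‖ ^ 2) (‖x + y‖ ^ 2) :=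
    (pow_left_monotoneOn (n := 2)).map_min (norm_nonneg _) (norm_nonneg _)
  rw [hsq, norm_sub_sq_real, norm_add_sq_real]
  rcases le_total 0 ⟪x, y⟫ with h | h
  · rw [abs_of_nonneg h, min_eq_left (by linarith)]
    ring
  · rw [abs_of_nonpos h, min_eq_right (by linarith)]
    ring

lemma sum_abs_add_le {ι : Type*} (s : Finset ι) {c : ι → ℝ} (hc : ∀ i ∈ s, |c i| ≤ 1)
    (hsum : ∑ i ∈ s, c i = 0) {p : ℝ} (hp : |p| ≤ 1) :
    ∑ i ∈ s, |p + c i| ≤ #s * |p| + (1 - |p|) * ∑ i ∈ s, |c i| := by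
  wlog hp0 : 0 ≤ p generalizing p c
  · have h := this (c := fun i => -c i) (by simpa using hc) (by simp [hsum]) (p := -p)
      (by rwa [abs_neg]) (by linarith)
    simpa only [abs_neg, ← neg_add, sum_neg_distrib] using h
  rw [abs_of_nonneg hp0] at hp ⊢
  have hterm : ∀ i ∈ s, |p + c i| ≤ (1 - p) * |c i| + p * (1 + c i) := by
    intro i hi
    have hci := abs_le.mp (hc i hi)
    calc |p + c i| = |(1 - p) * c i + p * (1 + c i)| := by ring_nf
      _ ≤ |(1 - p) * c i| + |p * (1 + c i)| := abs_add_le _ _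
      _ = (1 - p) * |c i| + p * (1 + c i) := by
        rw [abs_mul, abs_mul, abs_of_nonneg (by linarith : 0 ≤ 1 - p), abs_of_nonneg hp0,
          abs_of_nonneg (by linarith : 0 ≤ 1 + c i)]
  calc ∑ i ∈ s, |p + c i| ≤ ∑ i ∈ s, ((1 - p) * |c i| + p * (1 + c i)) := sum_le_sum hterm
    _ = #s * p + (1 - p) * ∑ i ∈ s, |c i| := by
      rw [sum_add_distrib, ← mul_sum, ← mul_sum, sum_add_distrib, hsum, sum_const, nsmul_one]
      ring

section AbsCosSums

variable {m : ℕ}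

lemma periodic_abs_cos_add_mul_pi_div (hm : m ≠ 0) (ψ : ℝ) :
    Function.Periodic (fun k : ℕ => |cos (ψ + k * (π / m))|) m := by
  intro k
  simp only [Nat.cast_add]
  rw [show ψ + (k + m) * (π / m) = ψ + k * (π / m) + π by field_simp; ring, cos_add_pi, abs_neg]

lemma sum_abs_cos_add_mul_two_pi_div (hodd : Odd m) (ψ : ℝ) :
    ∑ k ∈ range m, |cos (ψ + k * (2 * π / m))| = ∑ k ∈ range m, |cos (ψ + k * (π / m))| := by
  have hm : m ≠ 0 := by rintro rfl; simp at hodd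
  have h := sum_range_mul_add_of_periodic (periodic_abs_cos_add_mul_pi_div hm ψ)
    (Nat.coprime_two_left.mpr hodd) 0
  simp only [add_zero, Nat.cast_mul, Nat.cast_ofNat] at h
  rw [← h]
  refine sum_congr rfl fun k _ => ?_
  ring_nf

lemma periodic_sum_abs_cos_add_mul_pi_div (hm : m ≠ 0) :
    Function.Periodic (fun ψ => ∑ k ∈ range m, |cos (ψ + k * (π / m))|) (π / m) := by
  intro ψ
  have h := sum_range_mul_add_of_periodic (periodic_abs_cos_add_mul_pi_div hm ψ)
    (Nat.coprime_one_left m) 1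
  simp only [one_mul, Nat.cast_add, Nat.cast_one] at h
  dsimp only
  rw [← h]
  refine sum_congr rfl fun k _ => ?_
  ring_nf

lemma sin_pi_div_two_mul_pos (hm : m ≠ 0) : 0 < sin (π / (2 * m)) := by
  have hm' : (1 : ℝ) ≤ m := by exact_mod_cast Nat.one_le_iff_ne_zero.mpr hm
  refine sin_pos_of_pos_of_lt_pi (by positivity) ?_
  rw [div_lt_iff₀ (by positivity)]
  nlinarith [pi_pos]

lemma sum_abs_cos_add_mul_pi_div_of_mem_Icc (hm : m ≠ 0) {ψ : ℝ}
    (hψ : ψ ∈ Set.Icc (-(π / 2)) (-(π / 2) + π / m)) :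
    ∑ k ∈ range m, |cos (ψ + k * (π / m))| = -sin (ψ - π / (2 * m)) / sin (π / (2 * m)) := by
  have hm' : (1 : ℝ) ≤ m := by exact_mod_cast Nat.one_le_iff_ne_zero.mpr hm
  have hcos : ∀ k ∈ range m, |cos (ψ + k * (π / m))| = cos (ψ + k * (π / m)) := by
    intro k hk
    have hk : (k : ℝ) + 1 ≤ m := by exact_mod_cast mem_range.mp hk
    refine abs_of_nonneg (cos_nonneg_of_mem_Icc ⟨?_, ?_⟩)
    · nlinarith [hψ.1, div_pos pi_pos (by positivity : (0 : ℝ) < m)]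
    · have : (k : ℝ) * (π / m) ≤ π - π / m := by
        rw [show π - π / m = (m - 1) * (π / m) by field_simp]
        gcongr
        linarith
      linarith [hψ.2]
  rw [sum_congr rfl hcos, eq_div_iff (sin_pi_div_two_mul_pos hm).ne']
  have h := two_mul_sin_mul_sum_cos ψ (π / m) m
  rw [show π / m / 2 = π / (2 * m) by ring,
    show ψ + m * (π / m) - π / (2 * m) = ψ - π / (2 * m) + π by field_simp; ring,
    sin_add_pi] at h
  linarith

lemma sum_abs_cos_add_mul_pi_div_le (hm : m ≠ 0) (ψ : ℝ) :
    ∑ k ∈ range m, |cos (ψ + k * (π / m))| ≤ 1 / sin (π / (2 * m)) := by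
  obtain ⟨ψ', hψ', hψψ'⟩ := (periodic_sum_abs_cos_add_mul_pi_div hm).exists_mem_Ico
    (div_pos pi_pos (by positivity)) ψ (-(π / 2))
  rw [hψψ', sum_abs_cos_add_mul_pi_div_of_mem_Icc hm (Set.Ico_subset_Icc_self hψ')]
  gcongr
  · exact (sin_pi_div_two_mul_pos hm).le
  · linarith [neg_one_le_sin (ψ' - π / (2 * m))]

lemma sum_abs_cos_add_mul_pi_div_eq (hm : m ≠ 0) :
    ∑ k ∈ range m, |cos (π / (2 * m) - π / 2 + k * (π / m))| = 1 / sin (π / (2 * m)) := by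
  have hm' : (1 : ℝ) ≤ m := by exact_mod_cast Nat.one_le_iff_ne_zero.mpr hm
  rw [sum_abs_cos_add_mul_pi_div_of_mem_Icc hm ⟨?_, ?_⟩]
  · rw [show π / (2 * m) - π / 2 - π / (2 * m) = -(π / 2) by ring, sin_neg, sin_pi_div_two, neg_neg]
  · have : 0 < π / (2 * m) := by positivity
    linarith
  · have : π / (2 * m) ≤ π / m := by gcongr; linarith
    linarith

end AbsCosSums

lemma ratioSet_subset_Icc {n d : ℕ} {A : Fin n → EuclideanSpace ℝ (Fin d)} {a b : ℝ}
    (hlo : ∀ x y, a * min ‖x - y‖ ‖x + y‖ ^ 2 ≤ phiDist A x y ^ 2)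
    (hhi : ∀ x y, phiDist A x y ^ 2 ≤ b * min ‖x - y‖ ‖x + y‖ ^ 2) :
    ratioSet A ⊆ Set.Icc (√a) (√b) := by
  rintro _ ⟨x, y, hd, rfl⟩
  have hd0 : 0 < min ‖x - y‖ ‖x + y‖ ^ 2 :=
    pow_pos (lt_of_le_of_ne (le_min (norm_nonneg _) (norm_nonneg _)) hd.symm) 2
  have hphi : 0 ≤ phiDist A x y := sqrt_nonneg _
  have hq : phiDist A x y / min ‖x - y‖ ‖x + y‖ =
      √((phiDist A x y / min ‖x - y‖ ‖x + y‖) ^ 2) :=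
    (sqrt_sq (div_nonneg hphi (le_min (norm_nonneg _) (norm_nonneg _)))).symm
  rw [hq, div_pow]
  exact ⟨sqrt_le_sqrt ((le_div_iff₀ hd0).mpr (hlo x y)),
    sqrt_le_sqrt ((div_le_iff₀ hd0).mpr (hhi x y))⟩

lemma sqrt_mem_ratioSet {n d : ℕ} {A : Fin n → EuclideanSpace ℝ (Fin d)}
    {x y : EuclideanSpace ℝ (Fin d)} {c : ℝ} (hd : min ‖x - y‖ ‖x + y‖ ≠ 0)
    (h : phiDist A x y ^ 2 = c * min ‖x - y‖ ‖x + y‖ ^ 2) : √c ∈ ratioSet A := by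
  have hphi : 0 ≤ phiDist A x y := sqrt_nonneg _
  refine ⟨x, y, hd, ?_⟩
  rw [eq_div_of_mul_eq (pow_ne_zero 2 hd) h.symm, ← div_pow,
    sqrt_sq (div_nonneg hphi (le_min (norm_nonneg _) (norm_nonneg _)))]

section HarmonicFrame

variable {m : ℕ}

local notation "ℝ²" => EuclideanSpace ℝ (Fin 2)

noncomputable def unitVec (α : ℝ) : ℝ² := (EuclideanSpace.equiv (Fin 2) ℝ).symm ![cos α, sin α]

lemma harmonicFrame_eq_unitVec (m : ℕ) (j : Fin m) :
    harmonicFrame m j = unitVec ((j : ℕ) * π / m) :=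
  rfl

lemma inner_unitVec (α β : ℝ) : ⟪unitVec α, unitVec β⟫ = cos (α - β) := by
  simp [unitVec, PiLp.inner_apply, Fin.sum_univ_two, cos_sub]
  ring

lemma norm_unitVec (α : ℝ) : ‖unitVec α‖ = 1 := by
  have h : ‖unitVec α‖ ^ 2 = 1 ^ 2 := by
    rw [← real_inner_self_eq_norm_sq, inner_unitVec, sub_self, cos_zero, one_pow]
  exact (pow_left_inj₀ (norm_nonneg _) zero_le_one two_ne_zero).mp h

lemma exists_eq_norm_smul_unitVec (x : ℝ²) : ∃ α, x = ‖x‖ • unitVec α := by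
  set z : ℂ := ⟨x 0, x 1⟩
  have hz : ‖z‖ = ‖x‖ := by
    rw [EuclideanSpace.norm_eq, Complex.norm_def, Complex.normSq_apply, Fin.sum_univ_two]
    simp [z, sq]
  refine ⟨Complex.arg z, ?_⟩
  ext i
  fin_cases i
  · simp [unitVec, ← hz, Complex.norm_mul_cos_arg, z]
  · simp [unitVec, ← hz, Complex.norm_mul_sin_arg, z]

lemma sq_abs_mul_cos_sub_abs_mul_cos {r s : ℝ} (hr : 0 ≤ r) (hs : 0 ≤ s) (θ α β : ℝ) :
    (|r * cos (θ - α)| - |s * cos (θ - β)|) ^ 2 =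
      r ^ 2 / 2 * (1 + cos (2 * θ - 2 * α)) + s ^ 2 / 2 * (1 + cos (2 * θ - 2 * β)) -
        r * s * |cos (α - β) + cos (2 * θ - (α + β))| := by
  have hprod : 2 * (|r * cos (θ - α)| * |s * cos (θ - β)|) =
      r * s * |cos (α - β) + cos (2 * θ - (α + β))| := by
    rw [← abs_mul, ← abs_two, ← abs_mul, show 2 * (r * cos (θ - α) * (s * cos (θ - β))) =
      r * s * (2 * cos (θ - α) * cos (θ - β)) by ring, two_mul_cos_mul_cos, abs_mul,
      abs_of_nonneg (mul_nonneg hr hs), ← cos_neg (θ - α - (θ - β))]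
    ring_nf
  rw [sub_sq, sq_abs, sq_abs, mul_pow, mul_pow, cos_sq, cos_sq, mul_assoc, hprod]
  ring_nf

lemma phiDist_harmonicFrame_sq (hm : 1 < m) {r s : ℝ} (hr : 0 ≤ r) (hs : 0 ≤ s) (α β : ℝ) :
    phiDist (harmonicFrame m) (r • unitVec α) (s • unitVec β) ^ 2 =
      m / 2 * (r ^ 2 + s ^ 2) -
        r * s * ∑ k ∈ range m, |cos (α - β) + cos (-(α + β) + k * (2 * π / m))| := by
  have hinner : ∀ (j : Fin m) (t γ : ℝ),
      ⟪harmonicFrame m j, t • unitVec γ⟫ = t * cos ((j : ℕ) * π / m - γ) := fun j t γ => by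
    rw [inner_smul_right, harmonicFrame_eq_unitVec, inner_unitVec]
  rw [phiDist, sq_sqrt (sum_nonneg fun _ _ => sq_nonneg _)]
  simp only [hinner]
  rw [Fin.sum_univ_eq_sum_range
    (fun k : ℕ => (|r * cos (k * π / m - α)| - |s * cos (k * π / m - β)|) ^ 2)]
  have hterm : ∀ k : ℕ, (|r * cos (k * π / m - α)| - |s * cos (k * π / m - β)|) ^ 2 =
      r ^ 2 / 2 * (1 + cos (-(2 * α) + k * (2 * π / m))) +
        s ^ 2 / 2 * (1 + cos (-(2 * β) + k * (2 * π / m))) -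
        r * s * |cos (α - β) + cos (-(α + β) + k * (2 * π / m))| := fun k => by
    rw [sq_abs_mul_cos_sub_abs_mul_cos hr hs]
    ring_nf
  simp only [hterm, sum_sub_distrib, sum_add_distrib, ← mul_sum, sum_const, card_range,
    nsmul_eq_mul, sum_cos_add_mul_two_pi_div hm]
  ring

lemma sq_min_norm_smul_unitVec {r s : ℝ} (hr : 0 ≤ r) (hs : 0 ≤ s) (α β : ℝ) :
    min ‖r • unitVec α - s • unitVec β‖ ‖r • unitVec α + s • unitVec β‖ ^ 2 =
      r ^ 2 + s ^ 2 - 2 * (r * s) * |cos (α - β)| := by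
  rw [sq_min_norm_sub_norm_add, norm_smul, norm_smul, norm_unitVec, norm_unitVec,
    real_inner_smul_left, real_inner_smul_right, inner_unitVec, ← mul_assoc, abs_mul,
    abs_of_nonneg (mul_nonneg hr hs), Real.norm_of_nonneg hr, Real.norm_of_nonneg hs]
  ring

lemma phiDist_harmonicFrame_sq_le (hm : 1 < m) (x y : ℝ²) :
    phiDist (harmonicFrame m) x y ^ 2 ≤ m / 2 * min ‖x - y‖ ‖x + y‖ ^ 2 := by
  obtain ⟨α, hx⟩ := exists_eq_norm_smul_unitVec x
  obtain ⟨β, hy⟩ := exists_eq_norm_smul_unitVec y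
  have hr := norm_nonneg x
  have hs := norm_nonneg y
  rw [hx, hy, phiDist_harmonicFrame_sq hm hr hs, sq_min_norm_smul_unitVec hr hs]
  have hsum : m * |cos (α - β)| ≤
      ∑ k ∈ range m, |cos (α - β) + cos (-(α + β) + k * (2 * π / m))| := calc
    m * |cos (α - β)| = |∑ k ∈ range m, (cos (α - β) + cos (-(α + β) + k * (2 * π / m)))| := by
      rw [sum_add_distrib, sum_cos_add_mul_two_pi_div hm, sum_const, card_range, nsmul_eq_mul,
        add_zero, abs_mul, Nat.abs_cast]
    _ ≤ _ := abs_sum_le_sum_abs _ _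
  nlinarith [mul_le_mul_of_nonneg_left hsum (mul_nonneg hr hs)]

lemma sum_abs_cos_add_cos_le (hm : 1 < m) (hodd : Odd m) (δ γ : ℝ) :
    ∑ k ∈ range m, |cos δ + cos (γ + k * (2 * π / m))| ≤
      m * |cos δ| + (1 - |cos δ|) * (1 / sin (π / (2 * m))) := calc
  _ ≤ #(range m) * |cos δ| + (1 - |cos δ|) * ∑ k ∈ range m, |cos (γ + k * (2 * π / m))| :=
    sum_abs_add_le _ (fun _ _ => abs_cos_le_one _) (sum_cos_add_mul_two_pi_div hm γ)
      (abs_cos_le_one δ)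
  _ ≤ _ := by
    rw [card_range, sum_abs_cos_add_mul_two_pi_div hodd]
    gcongr
    · exact sub_nonneg.mpr (abs_cos_le_one δ)
    · exact sum_abs_cos_add_mul_pi_div_le (by omega) γ

lemma phiDist_harmonicFrame_sq_ge (hm : 1 < m) (hodd : Odd m) (x y : ℝ²) :
    (m / 2 - 1 / (2 * sin (π / (2 * m)))) * min ‖x - y‖ ‖x + y‖ ^ 2 ≤
      phiDist (harmonicFrame m) x y ^ 2 := by
  obtain ⟨α, hx⟩ := exists_eq_norm_smul_unitVec x
  obtain ⟨β, hy⟩ := exists_eq_norm_smul_unitVec y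
  have hr := norm_nonneg x
  have hs := norm_nonneg y
  rw [hx, hy, phiDist_harmonicFrame_sq hm hr hs, sq_min_norm_smul_unitVec hr hs]
  have hsum := sum_abs_cos_add_cos_le hm hodd (α - β) (-(α + β))
  have hK : 0 ≤ 1 / sin (π / (2 * m)) := (one_div_pos.mpr (sin_pi_div_two_mul_pos (by omega))).le
  rw [show 1 / (2 * sin (π / (2 * m))) = 1 / sin (π / (2 * m)) / 2 by ring]
  -- the slack is `(‖x‖ - ‖y‖)² / (2 sin(π/2m))`
  nlinarith [mul_le_mul_of_nonneg_left hsum (mul_nonneg hr hs),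
    mul_nonneg hK (sq_nonneg (‖x‖ - ‖y‖))]

lemma sqrt_div_two_mem_ratioSet_harmonicFrame (hm : 1 < m) :
    √(m / 2) ∈ ratioSet (harmonicFrame m) := by
  have hmin : min ‖(1 : ℝ) • unitVec 0 - (0 : ℝ) • unitVec 0‖
      ‖(1 : ℝ) • unitVec 0 + (0 : ℝ) • unitVec 0‖ ^ 2 = 1 := by
    rw [sq_min_norm_smul_unitVec zero_le_one le_rfl]
    norm_num
  have hphi : phiDist (harmonicFrame m) ((1 : ℝ) • unitVec 0) ((0 : ℝ) • unitVec 0) ^ 2 =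
      m / 2 := by
    rw [phiDist_harmonicFrame_sq hm zero_le_one le_rfl]
    norm_num
  refine sqrt_mem_ratioSet (fun h => ?_) (by rw [hmin, hphi, mul_one])
  rw [h] at hmin
  norm_num at hmin

lemma sqrt_sub_mem_ratioSet_harmonicFrame (hm : 1 < m) (hodd : Odd m) :
    √(m / 2 - 1 / (2 * sin (π / (2 * m)))) ∈ ratioSet (harmonicFrame m) := by
  -- `α - β = π/2`, and `α + β` makes `∑ |cos (2jπ/m - α - β)|` attain `1 / sin (π/2m)`
  set α := π / 2 - π / (4 * m)
  set β := -(π / (4 * m))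
  have hαβ : α - β = π / 2 := by ring
  have hγ : -(α + β) = π / (2 * m) - π / 2 := by ring
  have hmin : min ‖(1 : ℝ) • unitVec α - (1 : ℝ) • unitVec β‖
      ‖(1 : ℝ) • unitVec α + (1 : ℝ) • unitVec β‖ ^ 2 = 2 := by
    rw [sq_min_norm_smul_unitVec zero_le_one zero_le_one, hαβ, cos_pi_div_two]
    norm_num
  have hphi : phiDist (harmonicFrame m) ((1 : ℝ) • unitVec α) ((1 : ℝ) • unitVec β) ^ 2 =
      m - 1 / sin (π / (2 * m)) := by
    rw [phiDist_harmonicFrame_sq hm zero_le_one zero_le_one, hαβ, hγ, cos_pi_div_two]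
    simp only [zero_add, sum_abs_cos_add_mul_two_pi_div hodd,
      sum_abs_cos_add_mul_pi_div_eq (by omega : m ≠ 0)]
    ring
  refine sqrt_mem_ratioSet (fun h => ?_) (by rw [hmin, hphi]; ring)
  rw [h] at hmin
  norm_num at hmin

end HarmonicFrame

theorem stmt3 (m : ℕ) (hm : 3 ≤ m) (hodd : Odd m) :
    LA (harmonicFrame m) = Real.sqrt ((m : ℝ) / 2 - 1 / (2 * Real.sin (π / (2 * m)))) ∧
    UA (harmonicFrame m) = Real.sqrt ((m : ℝ) / 2) ∧
    UA (harmonicFrame m) / LA (harmonicFrame m) =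
      1 / Real.sqrt (1 - 1 / ((m : ℝ) * Real.sin (π / (2 * m)))) := by
  have hm' : 1 < m := by omega
  have hbounds := ratioSet_subset_Icc (phiDist_harmonicFrame_sq_ge hm' hodd)
    (phiDist_harmonicFrame_sq_le hm')
  have hLA : LA (harmonicFrame m) = √(m / 2 - 1 / (2 * sin (π / (2 * m)))) :=
    IsLeast.csInf_eq ⟨sqrt_sub_mem_ratioSet_harmonicFrame hm' hodd,
      fun _ hr => (hbounds hr).1⟩
  have hUA : UA (harmonicFrame m) = √(m / 2) :=
    IsGreatest.csSup_eq ⟨sqrt_div_two_mem_ratioSet_harmonicFrame hm', fun _ hr => (hbounds hr).2⟩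
  refine ⟨hLA, hUA, ?_⟩
  have hσ := sin_pi_div_two_mul_pos (by omega : m ≠ 0)
  rw [hLA, hUA, show (m : ℝ) / 2 - 1 / (2 * sin (π / (2 * m))) =
      m / 2 * (1 - 1 / (m * sin (π / (2 * m)))) by field_simp,
    sqrt_mul (by positivity), div_mul_cancel_left₀ (sqrt_ne_zero'.mpr (by positivity)),
    inv_eq_one_div]
end

section
/- Let m ≥ 1 be an integer and let φ_1, φ_2, …, φ_{m+1} be real numbers with 0 = φ_1 ≤ φ_2 ≤ ⋯ ≤ φ_m ≤ φ_{m+1} = π, and let t_1, …, t_m be real numbers. Then there exists θ ∈ [0, π] such that Σ_{i=1}^m t_i²·|sin(θ − φ_i)| ≥ (1/(m·sin(π/(2m))))·Σ_{i=1}^m t_i². -/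
/-!
Extend the angles to a partition `0 = ψ 0 ≤ ψ 1 ≤ ⋯ ≤ ψ m = π` with arcs `[ψ k, ψ (k+1)]`,
midpoints `θ k` and weights `w k = sin ((ψ (k+1) - ψ k) / 2)`. For a partition point `α`,
`cos (· - α)` rises from `cos α` to `1` and falls to `-cos α`, so its increments along the
partition, which are `2 w k |sin (θ k - α)|` in absolute value, add up to at least `2`.
Weighting by `t i ^ 2` and exchanging the sums gives `∑ t i ^ 2 ≤ ∑ k, w k F (θ k)` with
`F θ = ∑ t i ^ 2 |sin (θ - φ i)|`. Since `∑ w k ≤ m sin (π / (2m))` by Jensen's inequality for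
the concave sine, the midpoint maximizing `F` does the job.
-/

open Real Finset

theorem abs_cos_sub_cos (x y : ℝ) :
    |cos x - cos y| = 2 * |sin ((x + y) / 2)| * |sin ((x - y) / 2)| := by
  rw [cos_sub_cos, abs_mul, abs_mul, abs_neg, abs_two]

theorem abs_sub_add_abs_sub_le_sum_range (f : ℕ → ℝ) {i n : ℕ} (hi : i ≤ n) :
    |f i - f 0| + |f n - f i| ≤ ∑ k ∈ range n, |f (k + 1) - f k| := by
  have h₁ := dist_le_Ico_sum_dist f (Nat.zero_le i)
  have h₂ := dist_le_Ico_sum_dist f hi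
  simp only [Real.dist_eq, abs_sub_comm (f _) (f (_ + 1))] at h₁ h₂
  rw [abs_sub_comm, abs_sub_comm (f n), range_eq_Ico,
    ← sum_Ico_consecutive _ (Nat.zero_le i) hi]
  exact add_le_add h₁ h₂

theorem one_le_sum_abs_sin_mul_abs_sin (ψ : ℕ → ℝ) {i n : ℕ} (hψ0 : ψ 0 = 0) (hψn : ψ n = π)
    (hi : i ≤ n) :
    1 ≤ ∑ k ∈ range n,
      |sin ((ψ (k + 1) - ψ k) / 2)| * |sin ((ψ k + ψ (k + 1)) / 2 - ψ i)| := by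
  have h := abs_sub_add_abs_sub_le_sum_range (fun k => cos (ψ k - ψ i)) hi
  have hterm : ∀ k, |cos (ψ (k + 1) - ψ i) - cos (ψ k - ψ i)| =
      2 * (|sin ((ψ (k + 1) - ψ k) / 2)| * |sin ((ψ k + ψ (k + 1)) / 2 - ψ i)|) := by
    intro k
    rw [abs_cos_sub_cos]
    ring_nf
  simp only [hterm, ← mul_sum, sub_self, cos_zero, hψ0, zero_sub, cos_neg, hψn, cos_pi_sub] at h
  have hcos := cos_le_one (ψ i)
  have hcos' := neg_one_le_cos (ψ i)
  rw [abs_of_nonneg (by linarith), abs_of_nonpos (by linarith)] at h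
  linarith

theorem sum_sin_le_card_mul_sin_sum_div_card {ι : Type*} (s : Finset ι) (x : ι → ℝ)
    (hx : ∀ k ∈ s, x k ∈ Set.Icc 0 π) :
    ∑ k ∈ s, sin (x k) ≤ #s * sin ((∑ k ∈ s, x k) / #s) := by
  rcases s.eq_empty_or_nonempty with rfl | hs
  · simp
  have hcard : (0 : ℝ) < #s := by exact_mod_cast hs.card_pos
  have hjensen := strictConcaveOn_sin_Icc.concaveOn.le_map_sum (t := s)
    (w := fun _ => (#s : ℝ)⁻¹) (p := x) (fun _ _ => by positivity) (by simp [hcard.ne']) hx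
  simp only [smul_eq_mul, ← mul_sum] at hjensen
  rw [inv_mul_eq_div, inv_mul_eq_div, div_le_iff₀ hcard] at hjensen
  linarith

theorem exists_le_mul_of_le_sum_mul {ι : Type*} {s : Finset ι} (hs : s.Nonempty) {w F : ι → ℝ}
    (hw : ∀ k ∈ s, 0 ≤ w k) (hF : ∀ k ∈ s, 0 ≤ F k) {S W : ℝ}
    (hS : S ≤ ∑ k ∈ s, w k * F k) (hW : ∑ k ∈ s, w k ≤ W) :
    ∃ k ∈ s, S ≤ W * F k := by
  obtain ⟨j, hj, hmax⟩ := s.exists_max_image F hs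
  refine ⟨j, hj, hS.trans ?_⟩
  calc ∑ k ∈ s, w k * F k ≤ ∑ k ∈ s, w k * F j :=
        sum_le_sum fun k hk => mul_le_mul_of_nonneg_left (hmax k hk) (hw k hk)
    _ = (∑ k ∈ s, w k) * F j := (sum_mul ..).symm
    _ ≤ W * F j := mul_le_mul_of_nonneg_right hW (hF j hj)

theorem sum_abs_sin_half_sub_le (ψ : ℕ → ℝ) {n : ℕ} (hψ : Monotone ψ) (hψ0 : ψ 0 = 0)
    (hψn : ψ n = π) :
    ∑ k ∈ range n, |sin ((ψ (k + 1) - ψ k) / 2)| ≤ n * sin (π / (2 * n)) := by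
  have hhalf : ∀ k ∈ range n, (ψ (k + 1) - ψ k) / 2 ∈ Set.Icc 0 π := fun k hk => by
    have h₀ : ψ 0 ≤ ψ k := hψ (Nat.zero_le k)
    have h₁ : ψ (k + 1) ≤ ψ n := hψ (mem_range.1 hk)
    have h₂ : ψ k ≤ ψ (k + 1) := hψ (Nat.le_succ k)
    constructor <;> linarith
  calc ∑ k ∈ range n, |sin ((ψ (k + 1) - ψ k) / 2)|
      = ∑ k ∈ range n, sin ((ψ (k + 1) - ψ k) / 2) :=
        sum_congr rfl fun k hk => abs_of_nonneg (sin_nonneg_of_mem_Icc (hhalf k hk))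
    _ ≤ n * sin (π / (2 * n)) := by
      convert sum_sin_le_card_mul_sin_sum_div_card _ _ hhalf using 3
      · simp
      · rw [← sum_div, sum_range_sub ψ, hψn, hψ0, card_range]; ring

theorem mul_sin_pi_div_two_mul_pos {n : ℕ} (hn : 1 ≤ n) : 0 < n * sin (π / (2 * n)) := by
  have hn' : (1 : ℝ) ≤ n := by exact_mod_cast hn
  refine mul_pos (by positivity) (sin_pos_of_pos_of_lt_pi (by positivity) ?_)
  exact div_lt_self pi_pos (by linarith)

theorem exists_mem_Icc_sum_sq_le_sum_sq_mul_abs_sin (ψ : ℕ → ℝ) {n : ℕ} (hn : 1 ≤ n)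
    (hψ : Monotone ψ) (hψ0 : ψ 0 = 0) (hψn : ψ n = π) {ι : Type*} (s : Finset ι) (t : ι → ℝ)
    (j : ι → ℕ) (hj : ∀ i ∈ s, j i ≤ n) :
    ∃ θ ∈ Set.Icc 0 π, 1 / (n * sin (π / (2 * n))) * ∑ i ∈ s, t i ^ 2 ≤
      ∑ i ∈ s, t i ^ 2 * |sin (θ - ψ (j i))| := by
  set mid : ℕ → ℝ := fun k => (ψ k + ψ (k + 1)) / 2
  set w : ℕ → ℝ := fun k => |sin ((ψ (k + 1) - ψ k) / 2)|
  set F : ℝ → ℝ := fun θ => ∑ i ∈ s, t i ^ 2 * |sin (θ - ψ (j i))|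
  have hcover : ∑ i ∈ s, t i ^ 2 ≤ ∑ k ∈ range n, w k * F (mid k) := calc
    ∑ i ∈ s, t i ^ 2 ≤ ∑ i ∈ s, t i ^ 2 * ∑ k ∈ range n, w k * |sin (mid k - ψ (j i))| :=
      sum_le_sum fun i hi => le_mul_of_one_le_right (sq_nonneg _) <|
        one_le_sum_abs_sin_mul_abs_sin ψ hψ0 hψn (hj i hi)
    _ = ∑ k ∈ range n, w k * F (mid k) := by
      simp only [F, mul_sum]
      rw [sum_comm]
      exact sum_congr rfl fun _ _ => sum_congr rfl fun _ _ => by ring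
  obtain ⟨k, hk, hkF⟩ := exists_le_mul_of_le_sum_mul (nonempty_range_iff.2 (by omega))
    (fun k _ => abs_nonneg _) (fun k _ => sum_nonneg fun i _ => by positivity) hcover
    (sum_abs_sin_half_sub_le ψ hψ hψ0 hψn)
  refine ⟨mid k, ?_, ?_⟩
  · have h₀ : ψ 0 ≤ ψ k := hψ (Nat.zero_le k)
    have h₁ : ψ (k + 1) ≤ ψ n := hψ (mem_range.1 hk)
    have h₂ : ψ k ≤ ψ (k + 1) := hψ (Nat.le_succ k)
    constructor <;> simp only [mid] <;> linarith
  · rwa [one_div, inv_mul_le_iff₀ (mul_sin_pi_div_two_mul_pos hn)]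

theorem stmt6 (m : ℕ) (hm : 1 ≤ m) (φ : Fin (m + 1) → ℝ) (t : Fin m → ℝ)
    (hφ0 : φ 0 = 0) (hφlast : φ (Fin.last m) = π) (hφmono : Monotone φ) :
    ∃ θ ∈ Set.Icc (0 : ℝ) π,
      (1 / ((m : ℝ) * Real.sin (π / (2 * m)))) * ∑ i, t i ^ 2 ≤
        ∑ i : Fin m, t i ^ 2 * |Real.sin (θ - φ i.castSucc)| := by
  set ψ : ℕ → ℝ := fun k => φ (Fin.clamp k m)
  have hψmono : Monotone ψ := fun a b hab =>
    hφmono (by simp only [Fin.le_def, Fin.coe_clamp]; omega)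
  have hψm : ψ m = π := by simpa [ψ, Fin.clamp, Fin.last] using hφlast
  have hψi : ∀ i : Fin m, φ i.castSucc = ψ i := fun i => by
    simp [ψ, Fin.clamp, Fin.castSucc, Fin.castAdd, Fin.castLE, i.isLt.le]
  simpa only [hψi] using exists_mem_Icc_sum_sq_le_sum_sq_mul_abs_sin ψ hm hψmono hφ0 hψm
    univ t Fin.val fun i _ => i.isLt.le
end

section
/- Let m ≥ 1 be an integer, let t_1, …, t_m be real numbers, and let u_1, …, u_m ∈ ℝ³ be unit vectors (‖u_i‖₂ = 1). Then there exists a unit vector v ∈ ℝ³ (‖v‖₂ = 1) such that (1/2)·Σ_{i=1}^m t_i²·√(1 − ⟨u_i, v⟩²) ≥ (π/8)·Σ_{i=1}^m t_i². -/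
/-! Let `v₀` maximize `F v = ∑ tᵢ² √(1 - ⟪uᵢ, v⟫²)` on the unit sphere. The distance
`axisDist u x` from `x` to the line `ℝ u` is `‖x‖ √(1 - ⟪u, x / ‖x‖⟫²)`, so
`∑ tᵢ² axisDist uᵢ x ≤ ‖x‖ F v₀` on all of `ℝ³`. Integrate against the rotation-invariant
weight `exp (-‖x‖²)`: after a rotation taking `uᵢ` to the first basis vector the left integrand
splits as `exp (-x₀²) · ‖p‖ exp (-‖p‖²)` with `p ∈ ℝ²`, giving `π² / 2 · ∑ tᵢ²`, while
`∫ ‖x‖ exp (-‖x‖²) = 2π`. Hence `F v₀ ≥ π / 4 · ∑ tᵢ²`. -/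

open Real MeasureTheory Metric Set

open scoped InnerProductSpace

section AxisDist

variable {E : Type*} [NormedAddCommGroup E] [InnerProductSpace ℝ E]

noncomputable def axisDist (u x : E) : ℝ := √(‖x‖ ^ 2 - ⟪u, x⟫_ℝ ^ 2)

lemma axisDist_le_norm (u x : E) : axisDist u x ≤ ‖x‖ := by
  rw [axisDist, sqrt_le_left (norm_nonneg x)]
  nlinarith [sq_nonneg ⟪u, x⟫_ℝ]

@[fun_prop]
lemma continuous_axisDist (u : E) : Continuous (axisDist u) := by
  unfold axisDist; fun_prop

lemma axisDist_eq_norm_mul (u x : E) :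
    axisDist u x = ‖x‖ * √(1 - ⟪u, ‖x‖⁻¹ • x⟫_ℝ ^ 2) := by
  rcases eq_or_ne x 0 with rfl | hx
  · simp [axisDist]
  rw [axisDist, real_inner_smul_right, ← sqrt_sq (norm_nonneg x), ← sqrt_mul (sq_nonneg _),
    sqrt_sq (norm_nonneg x)]
  congr 1
  field_simp

lemma axisDist_map (R : E ≃ₗᵢ[ℝ] E) (u x : E) : axisDist (R u) (R x) = axisDist u x := by
  simp only [axisDist, LinearIsometryEquiv.inner_map_map, LinearIsometryEquiv.norm_map]

lemma sum_mul_axisDist_le_of_isMaxOn {ι : Type*} (s : Finset ι) (c : ι → ℝ) (u : ι → E) {v₀ : E}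
    (hmax : IsMaxOn (fun v => ∑ i ∈ s, c i * √(1 - ⟪u i, v⟫_ℝ ^ 2)) (sphere 0 1) v₀) (x : E) :
    ∑ i ∈ s, c i * axisDist (u i) x ≤ ‖x‖ * ∑ i ∈ s, c i * √(1 - ⟪u i, v₀⟫_ℝ ^ 2) := by
  simp_rw [axisDist_eq_norm_mul, mul_left_comm (c _), ← Finset.mul_sum]
  rcases eq_or_ne x 0 with rfl | hx
  · simp
  refine mul_le_mul_of_nonneg_left (hmax ?_) (norm_nonneg x)
  simp [norm_smul, hx]

end AxisDist

lemma integral_Ioi_pow_mul_exp_neg_sq (n : ℕ) :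
    ∫ r in Ioi (0 : ℝ), r ^ n * exp (-r ^ 2) = Gamma ((n + 1) / 2) / 2 := by
  have h := integral_rpow_mul_exp_neg_rpow (p := 2) (q := n) two_pos
    (by linarith [n.cast_nonneg (α := ℝ)])
  simp only [rpow_natCast, rpow_two] at h
  rw [h, one_div_mul_eq_div]

lemma integral_norm_mul_exp_neg_norm_sq {E : Type*} [NormedAddCommGroup E] [NormedSpace ℝ E]
    [Nontrivial E] [FiniteDimensional ℝ E] [MeasurableSpace E] [BorelSpace E]
    (μ : Measure E) [μ.IsAddHaarMeasure] :
    ∫ x, ‖x‖ * exp (-‖x‖ ^ 2) ∂μ =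
      Module.finrank ℝ E * μ.real (ball 0 1) * (Gamma ((Module.finrank ℝ E + 1) / 2) / 2) := by
  rw [integral_fun_norm_addHaar μ (fun r => r * exp (-r ^ 2)), nsmul_eq_mul, smul_eq_mul]
  simp only [smul_eq_mul, ← mul_assoc, ← pow_succ]
  rw [integral_Ioi_pow_mul_exp_neg_sq, Nat.sub_add_cancel Module.finrank_pos]

lemma integral_norm_mul_exp_neg_norm_sq_fin_two :
    ∫ x : EuclideanSpace ℝ (Fin 2), ‖x‖ * exp (-‖x‖ ^ 2) = π * √π / 2 := by
  rw [integral_norm_mul_exp_neg_norm_sq, finrank_euclideanSpace_fin, measureReal_def,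
    EuclideanSpace.volume_ball_fin_two]
  have hΓ : Gamma (3 / 2) = √π / 2 := by
    rw [show (3 : ℝ) / 2 = 1 / 2 + 1 by norm_num, Gamma_add_one (by norm_num), Gamma_one_half_eq]
    ring
  norm_num [hΓ, pi_pos.le]
  ring

lemma integral_norm_mul_exp_neg_norm_sq_fin_three :
    ∫ x : EuclideanSpace ℝ (Fin 3), ‖x‖ * exp (-‖x‖ ^ 2) = 2 * π := by
  rw [integral_norm_mul_exp_neg_norm_sq, finrank_euclideanSpace_fin, measureReal_def,
    EuclideanSpace.volume_ball_fin_three, ENNReal.ofReal_one, one_pow, one_mul,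
    ENNReal.toReal_ofReal (by positivity)]
  norm_num [Gamma_two]
  ring

lemma integrable_norm_mul_exp_neg_norm_sq_fin_three :
    Integrable fun x : EuclideanSpace ℝ (Fin 3) => ‖x‖ * exp (-‖x‖ ^ 2) :=
  .of_integral_ne_zero (by rw [integral_norm_mul_exp_neg_norm_sq_fin_three]; positivity)

namespace EuclideanSpace

variable {n : ℕ}

noncomputable def headTailEquiv (n : ℕ) :
    EuclideanSpace ℝ (Fin (n + 1)) ≃ᵐ ℝ × EuclideanSpace ℝ (Fin n) :=
  (MeasurableEquiv.toLp 2 (Fin (n + 1) → ℝ)).symm.trans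
    ((MeasurableEquiv.piFinSuccAbove (fun _ => ℝ) 0).trans
      ((MeasurableEquiv.refl ℝ).prodCongr (MeasurableEquiv.toLp 2 (Fin n → ℝ))))

lemma headTailEquiv_apply (x : EuclideanSpace ℝ (Fin (n + 1))) :
    headTailEquiv n x = (x 0, WithLp.toLp 2 fun j => x j.succ) := rfl

lemma measurePreserving_headTailEquiv : MeasurePreserving (headTailEquiv n) := by
  have h := ((MeasurePreserving.id volume).prod (PiLp.volume_preserving_toLp (Fin n))).comp
    ((volume_preserving_piFinSuccAbove (fun _ : Fin (n + 1) => ℝ) 0).comp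
      (PiLp.volume_preserving_ofLp (Fin (n + 1))))
  rwa [← Measure.volume_eq_prod] at h

lemma norm_sq_eq_headTailEquiv (x : EuclideanSpace ℝ (Fin (n + 1))) :
    ‖x‖ ^ 2 = (headTailEquiv n x).1 ^ 2 + ‖(headTailEquiv n x).2‖ ^ 2 := by
  simp [headTailEquiv_apply, norm_sq_eq, Fin.sum_univ_succ]

lemma axisDist_single_zero (x : EuclideanSpace ℝ (Fin (n + 1))) :
    axisDist (single 0 1) x = ‖(headTailEquiv n x).2‖ := by
  rw [axisDist, inner_single_left, norm_sq_eq_headTailEquiv]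
  simp [headTailEquiv_apply]

end EuclideanSpace

open EuclideanSpace in
lemma integral_axisDist_single_zero_mul_exp_neg_norm_sq :
    ∫ x : EuclideanSpace ℝ (Fin 3), axisDist (single 0 1) x * exp (-‖x‖ ^ 2) = π ^ 2 / 2 := by
  let g (q : ℝ × EuclideanSpace ℝ (Fin 2)) := exp (-1 * q.1 ^ 2) * (‖q.2‖ * exp (-‖q.2‖ ^ 2))
  have hsplit (x : EuclideanSpace ℝ (Fin 3)) :
      axisDist (single 0 1) x * exp (-‖x‖ ^ 2) = g (headTailEquiv 2 x) := by
    rw [axisDist_single_zero, norm_sq_eq_headTailEquiv, neg_add, exp_add]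
    simp only [g, neg_one_mul]
    ring
  rw [integral_congr_ae (.of_forall hsplit), measurePreserving_headTailEquiv.integral_comp',
    Measure.volume_eq_prod, integral_prod_mul (fun s : ℝ => exp (-1 * s ^ 2))
      (fun p : EuclideanSpace ℝ (Fin 2) => ‖p‖ * exp (-‖p‖ ^ 2)),
    integral_gaussian, integral_norm_mul_exp_neg_norm_sq_fin_two, div_one]
  linear_combination (π / 2) * mul_self_sqrt pi_pos.le

lemma integral_axisDist_mul_exp_neg_norm_sq {u : EuclideanSpace ℝ (Fin 3)} (hu : ‖u‖ = 1) :
    ∫ x : EuclideanSpace ℝ (Fin 3), axisDist u x * exp (-‖x‖ ^ 2) = π ^ 2 / 2 := by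
  set e₀ : EuclideanSpace ℝ (Fin 3) := EuclideanSpace.single 0 1
  let R := (ℝ ∙ (u - e₀))ᗮ.reflection
  have hRu : R u = e₀ := Submodule.reflection_sub (by simp [e₀, hu])
  calc ∫ x, axisDist u x * exp (-‖x‖ ^ 2)
      = ∫ x, axisDist e₀ (R x) * exp (-‖R x‖ ^ 2) := by
        simp only [← hRu, axisDist_map, LinearIsometryEquiv.norm_map]
    _ = π ^ 2 / 2 := by
      rw [R.measurePreserving.integral_comp R.toHomeomorph.measurableEmbedding
        (fun y => axisDist e₀ y * exp (-‖y‖ ^ 2))]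
      exact integral_axisDist_single_zero_mul_exp_neg_norm_sq

lemma integrable_axisDist_mul_exp_neg_norm_sq (u : EuclideanSpace ℝ (Fin 3)) :
    Integrable fun x => axisDist u x * exp (-‖x‖ ^ 2) := by
  refine integrable_norm_mul_exp_neg_norm_sq_fin_three.mono' (by fun_prop)
    (.of_forall fun x => ?_)
  rw [norm_of_nonneg (by unfold axisDist; positivity)]
  gcongr
  exact axisDist_le_norm u x

lemma pi_div_four_mul_sum_le_of_isMaxOn {ι : Type*} (s : Finset ι) (c : ι → ℝ)
    (u : ι → EuclideanSpace ℝ (Fin 3)) (hu : ∀ i ∈ s, ‖u i‖ = 1) {v₀ : EuclideanSpace ℝ (Fin 3)}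
    (hmax : IsMaxOn (fun v => ∑ i ∈ s, c i * √(1 - ⟪u i, v⟫_ℝ ^ 2)) (sphere 0 1) v₀) :
    π / 4 * ∑ i ∈ s, c i ≤ ∑ i ∈ s, c i * √(1 - ⟪u i, v₀⟫_ℝ ^ 2) := by
  set M := ∑ i ∈ s, c i * √(1 - ⟪u i, v₀⟫_ℝ ^ 2)
  have hterm (i : ι) := (integrable_axisDist_mul_exp_neg_norm_sq (u i)).const_mul (c i)
  have key : π ^ 2 / 2 * ∑ i ∈ s, c i ≤ 2 * π * M :=
    calc π ^ 2 / 2 * ∑ i ∈ s, c i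
        = ∫ x, ∑ i ∈ s, c i * (axisDist (u i) x * exp (-‖x‖ ^ 2)) := by
          rw [integral_finsetSum _ fun i _ => hterm i, Finset.mul_sum]
          refine Finset.sum_congr rfl fun i hi => ?_
          rw [integral_const_mul, integral_axisDist_mul_exp_neg_norm_sq (hu i hi), mul_comm]
      _ ≤ ∫ x, ‖x‖ * exp (-‖x‖ ^ 2) * M := by
          refine integral_mono (integrable_finsetSum _ fun i _ => hterm i)
            (integrable_norm_mul_exp_neg_norm_sq_fin_three.mul_const _) fun x => ?_
          simp only [← mul_assoc, ← Finset.sum_mul]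
          rw [mul_right_comm]
          gcongr
          exact sum_mul_axisDist_le_of_isMaxOn s c u hmax x
      _ = 2 * π * M := by rw [integral_mul_const, integral_norm_mul_exp_neg_norm_sq_fin_three]
  refine le_of_mul_le_mul_left ?_ (by positivity : 0 < 2 * π)
  linarith

theorem stmt11_general (m : ℕ) (t : Fin m → ℝ)
    (u : Fin m → EuclideanSpace ℝ (Fin 3)) (hu : ∀ i, ‖u i‖ = 1) :
    ∃ v : EuclideanSpace ℝ (Fin 3), ‖v‖ = 1 ∧
      (π / 8) * ∑ i, t i ^ 2 ≤
        (1 / 2) * ∑ i, t i ^ 2 * Real.sqrt (1 - (inner ℝ (u i) v : ℝ) ^ 2) := by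
  obtain ⟨v, hv, hmax⟩ := (isCompact_sphere (0 : EuclideanSpace ℝ (Fin 3)) 1).exists_isMaxOn
    (NormedSpace.sphere_nonempty.mpr zero_le_one)
    (f := fun v => ∑ i, t i ^ 2 * √(1 - ⟪u i, v⟫_ℝ ^ 2)) (by fun_prop)
  refine ⟨v, mem_sphere_zero_iff_norm.mp hv, ?_⟩
  have := pi_div_four_mul_sum_le_of_isMaxOn Finset.univ (fun i => t i ^ 2) u (fun i _ => hu i) hmax
  linarith

theorem stmt11 (m : ℕ) (hm : 1 ≤ m) (t : Fin m → ℝ)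
    (u : Fin m → EuclideanSpace ℝ (Fin 3)) (hu : ∀ i, ‖u i‖ = 1) :
    ∃ v : EuclideanSpace ℝ (Fin 3), ‖v‖ = 1 ∧
      (π / 8) * ∑ i, t i ^ 2 ≤
        (1 / 2) * ∑ i, t i ^ 2 * Real.sqrt (1 - (inner ℝ (u i) v : ℝ) ^ 2) :=
  stmt11_general m t u hu
end

section
/- Let a and b be independent N(0,1) real random variables and let θ ∈ [0, π/2]. Then E[ |a·(a·cos(θ) + b·sin(θ))| ] = (2/π)·( sin(θ) + (π/2 − θ)·cos(θ) ). -/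
/-!
In polar coordinates `(u, v) = (r cos φ, r sin φ)` the integrand is `r² |cos φ cos (φ - θ)|` and
the standard Gaussian density on `ℝ²` is `(2π)⁻¹ e^{-r²/2}`, so the expectation factors as
`(2π)⁻¹ (∫₀^∞ r³ e^{-r²/2} dr) (∫_{-π}^{π} |cos φ cos (φ - θ)| dφ)`
`= (2π)⁻¹ · 2 · 2 (sin θ + (π/2 - θ) cos θ)`.
The angular integrand has period `π`; over the period `[θ - π/2, θ + π/2]` it changes sign only at
`π/2`, and `cos φ cos (φ - θ)` has the antiderivative `sin (2φ - θ)/4 + φ cos θ / 2`.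
-/

open Real MeasureTheory ProbabilityTheory
open Set intervalIntegral
open scoped NNReal

theorem integral_gaussianReal_prod_gaussianReal {E : Type*} [NormedAddCommGroup E]
    [NormedSpace ℝ E] (μ₁ μ₂ : ℝ) {v₁ v₂ : ℝ≥0} (hv₁ : v₁ ≠ 0) (hv₂ : v₂ ≠ 0) (f : ℝ × ℝ → E) :
    ∫ p, f p ∂(gaussianReal μ₁ v₁).prod (gaussianReal μ₂ v₂) =
      ∫ p, (gaussianPDFReal μ₁ v₁ p.1 * gaussianPDFReal μ₂ v₂ p.2) • f p := by
  rw [gaussianReal_of_var_ne_zero _ hv₁, gaussianReal_of_var_ne_zero _ hv₂,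
    prod_withDensity (measurable_gaussianPDF _ _) (measurable_gaussianPDF _ _),
    ← Measure.volume_eq_prod, integral_withDensity_eq_integral_toReal_smul (by fun_prop)
      (ae_of_all _ fun _ ↦ ENNReal.mul_lt_top gaussianPDF_lt_top gaussianPDF_lt_top)]
  simp only [ENNReal.toReal_mul, toReal_gaussianPDF]

theorem gaussianPDFReal_zero_one_mul (x y : ℝ) :
    gaussianPDFReal 0 1 x * gaussianPDFReal 0 1 y = (2 * π)⁻¹ * rexp (-(x ^ 2 + y ^ 2) / 2) := by
  simp only [gaussianPDFReal_def, NNReal.coe_one, mul_one, sub_zero]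
  rw [mul_mul_mul_comm, ← mul_inv, mul_self_sqrt (by positivity), ← Real.exp_add]
  ring_nf

theorem integral_gaussianReal_zero_one_prod_eq_polarCoord {E : Type*} [NormedAddCommGroup E]
    [NormedSpace ℝ E] (f : ℝ × ℝ → E) :
    ∫ p, f p ∂(gaussianReal 0 1).prod (gaussianReal 0 1) =
      (2 * π)⁻¹ • ∫ p in Ioi (0 : ℝ) ×ˢ Ioo (-π) π,
        (p.1 * rexp (-p.1 ^ 2 / 2)) • f (polarCoord.symm p) := by
  rw [integral_gaussianReal_prod_gaussianReal 0 0 one_ne_zero one_ne_zero,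
    ← integral_comp_polarCoord_symm, polarCoord_target, ← MeasureTheory.integral_smul]
  refine setIntegral_congr_fun (measurableSet_Ioi.prod measurableSet_Ioo) fun p _ ↦ ?_
  simp only [polarCoord_symm_apply, gaussianPDFReal_zero_one_mul, mul_pow, ← mul_add,
    cos_sq_add_sin_sq, mul_one, smul_smul]
  ring_nf

theorem integral_Ioi_pow_three_mul_exp_neg_sq_div_two :
    ∫ r in Ioi (0 : ℝ), r ^ 3 * rexp (-r ^ 2 / 2) = 2 := by
  have h := integral_rpow_mul_exp_neg_mul_rpow (p := 2) (q := 3) (b := 1 / 2)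
    (by norm_num) (by norm_num) (by norm_num)
  norm_num [Gamma_two] at h
  convert h using 1
  refine setIntegral_congr_fun measurableSet_Ioi fun r _ ↦ ?_
  norm_cast
  ring_nf

theorem periodic_abs_cos_mul_cos_sub (θ : ℝ) :
    Function.Periodic (fun φ ↦ |cos φ * cos (φ - θ)|) π := by
  intro φ
  simp only [add_sub_right_comm, cos_add_pi, neg_mul_neg]

theorem hasDerivAt_sin_two_mul_sub_div_four_add (θ φ : ℝ) :
    HasDerivAt (fun ψ ↦ sin (2 * ψ - θ) / 4 + ψ * cos θ / 2) (cos φ * cos (φ - θ)) φ := by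
  have hlin : HasDerivAt (fun ψ : ℝ ↦ 2 * ψ - θ) 2 φ := by
    simpa using ((hasDerivAt_id φ).const_mul 2).sub_const θ
  refine ((((hasDerivAt_sin _).comp φ hlin).div_const 4).add
    (((hasDerivAt_id φ).mul_const (cos θ)).div_const 2)).congr_deriv ?_
  have hθ : cos θ = cos (φ - (φ - θ)) := by rw [sub_sub_cancel]
  rw [show 2 * φ - θ = φ + (φ - θ) by ring, cos_add, hθ, cos_sub φ (φ - θ)]
  ring

theorem integral_cos_mul_cos_sub (θ a b : ℝ) :
    ∫ φ in a..b, cos φ * cos (φ - θ) =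
      (sin (2 * b - θ) / 4 + b * cos θ / 2) - (sin (2 * a - θ) / 4 + a * cos θ / 2) :=
  integral_eq_sub_of_hasDerivAt (fun φ _ ↦ hasDerivAt_sin_two_mul_sub_div_four_add θ φ)
    ((by fun_prop : Continuous fun φ ↦ cos φ * cos (φ - θ)).intervalIntegrable _ _)

theorem integral_abs_cos_mul_cos_sub {θ : ℝ} (hθ₀ : 0 ≤ θ) (hθ₁ : θ ≤ π / 2) :
    ∫ φ in (-π)..π, |cos φ * cos (φ - θ)| = 2 * (sin θ + (π / 2 - θ) * cos θ) := by
  have hπ := pi_pos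
  have hint : ∀ a b, IntervalIntegrable (fun φ ↦ |cos φ * cos (φ - θ)|) volume a b :=
    fun a b ↦ (by fun_prop : Continuous fun φ ↦ |cos φ * cos (φ - θ)|).intervalIntegrable a b
  have hperiod : ∫ φ in (-π)..π, |cos φ * cos (φ - θ)| =
      2 * ∫ φ in (θ - π / 2)..(θ - π / 2 + π), |cos φ * cos (φ - θ)| := by
    have h := (periodic_abs_cos_mul_cos_sub θ).intervalIntegral_add_zsmul_eq 2 (-π) hint
    rw [show -π + (2 : ℤ) • π = π by ring, zsmul_eq_mul] at h
    rw [h, (periodic_abs_cos_mul_cos_sub θ).intervalIntegral_add_eq (-π) (θ - π / 2)]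
    norm_num
  have hpos : ∫ φ in (θ - π / 2)..(π / 2), |cos φ * cos (φ - θ)| =
      ∫ φ in (θ - π / 2)..(π / 2), cos φ * cos (φ - θ) := by
    refine integral_congr fun φ hφ ↦ abs_of_nonneg (mul_nonneg ?_ ?_)
    all_goals
      rw [uIcc_of_le (by linarith)] at hφ
      exact cos_nonneg_of_mem_Icc ⟨by linarith [hφ.1], by linarith [hφ.2]⟩
  have hneg : ∫ φ in (π / 2)..(θ + π / 2), |cos φ * cos (φ - θ)| =
      -∫ φ in (π / 2)..(θ + π / 2), cos φ * cos (φ - θ) := by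
    rw [← intervalIntegral.integral_neg]
    refine integral_congr fun φ hφ ↦ abs_of_nonpos (mul_nonpos_of_nonpos_of_nonneg ?_ ?_)
    all_goals rw [uIcc_of_le (by linarith)] at hφ
    · exact cos_nonpos_of_pi_div_two_le_of_le hφ.1 (by linarith [hφ.2])
    · exact cos_nonneg_of_mem_Icc ⟨by linarith [hφ.1], by linarith [hφ.2]⟩
  rw [hperiod, show θ - π / 2 + π = θ + π / 2 by ring,
    ← integral_add_adjacent_intervals (hint _ (π / 2)) (hint _ _), hpos, hneg,
    integral_cos_mul_cos_sub, integral_cos_mul_cos_sub, show 2 * (π / 2) - θ = π - θ by ring,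
    show 2 * (θ - π / 2) - θ = θ - π by ring, show 2 * (θ + π / 2) - θ = θ + π by ring,
    sin_pi_sub, sin_sub_pi, sin_add_pi]
  ring

theorem stmt19 (θ : ℝ) (hθ : θ ∈ Set.Icc (0 : ℝ) (π / 2)) :
    ∫ p : ℝ × ℝ, |p.1 * (p.1 * Real.cos θ + p.2 * Real.sin θ)|
        ∂((gaussianReal 0 1).prod (gaussianReal 0 1)) =
      (2 / π) * (Real.sin θ + (π / 2 - θ) * Real.cos θ) := by
  have hpolar : ∀ p : ℝ × ℝ,
      (p.1 * rexp (-p.1 ^ 2 / 2)) • |(polarCoord.symm p).1 *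
          ((polarCoord.symm p).1 * cos θ + (polarCoord.symm p).2 * sin θ)| =
        p.1 ^ 3 * rexp (-p.1 ^ 2 / 2) * |cos p.2 * cos (p.2 - θ)| := by
    rintro ⟨r, φ⟩
    rw [polarCoord_symm_apply, smul_eq_mul, cos_sub,
      show r * cos φ * (r * cos φ * cos θ + r * sin φ * sin θ) =
        r ^ 2 * (cos φ * (cos φ * cos θ + sin φ * sin θ)) by ring,
      abs_mul, abs_of_nonneg (sq_nonneg r)]
    ring
  rw [integral_gaussianReal_zero_one_prod_eq_polarCoord, funext hpolar, Measure.volume_eq_prod,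
    ← Measure.prod_restrict, integral_prod_mul (fun r ↦ r ^ 3 * rexp (-r ^ 2 / 2))
      (fun φ ↦ |cos φ * cos (φ - θ)|), integral_Ioi_pow_three_mul_exp_neg_sq_div_two,
    ← integral_Ioc_eq_integral_Ioo, ← integral_of_le (by linarith [pi_pos]),
    integral_abs_cos_mul_cos_sub hθ.1 hθ.2, smul_eq_mul]
  field_simp
end
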